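/- For the ZDT3 problem with d = 30 variables, every point x ∈ [0,1]^30 with Σ_{i=2}^{30} x_i > 0 is strictly dominated by the point y = (x_1, 0, ..., 0): f1(y) = f1(x) and f2(y) < f2(x). Consequently every Pareto optimal point of ZDT3 satisfies x_i = 0 for all i ≥ 2. -/

import Mathlib

/-- `g(x) = 1 + (9/(30−1))·Σ_{i=2}^{30} x_i` for ZDT3 (0-indexed: sum over `i ≠ 0`). -/
noncomputable def zdt3G (x : Fin 30 → ℝ) : ℝ :=
  1 + (9 / 29) * ∑ i ∈ Finset.univ.erase (0 : Fin 30), x i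

/-- `f2(x) = g(x)·(1 − √(x_1/g(x)) − (x_1/g(x))·sin(10π x_1))` for ZDT3. -/
noncomputable def zdt3F2 (x : Fin 30 → ℝ) : ℝ :=
  zdt3G x * (1 - Real.sqrt (x 0 / zdt3G x)
    - (x 0 / zdt3G x) * Real.sin (10 * Real.pi * x 0))

/-!
Write `f₂ = g · (1 - √(f₁/g) - (f₁/g) sin(10π f₁))` as `g - √f₁ √g - f₁ sin(10π f₁)`. For fixed
`f₁ ≤ g`, the map `g ↦ g - √f₁ √g` is strictly increasing, since
`(g' - g) - √f₁ (√g' - √g) = (√g' - √g)(√g' + √g - √f₁)`. Zeroing `x₂, …, x₃₀` keeps `f₁ = x₁`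
and lowers `g` to its minimum `1 ≥ f₁`, hence strictly lowers `f₂` whenever some `xᵢ` (`i ≥ 2`)
is positive; so a Pareto optimal point has all of them zero.
-/

open Real

lemma mul_one_sub_sqrt_div_sub_div_mul {a g : ℝ} (s : ℝ) (ha : 0 ≤ a) (hg : 0 < g) :
    g * (1 - √(a / g) - a / g * s) = g - √a * √g - a * s := by
  have hsg : √g * √g = g := mul_self_sqrt hg.le
  have hsg0 : √g ≠ 0 := (sqrt_pos.2 hg).ne'
  have hsqrt : g * (√a / √g) = √a * √g := by
    rw [← mul_div_assoc, div_eq_iff hsg0, mul_assoc, hsg, mul_comm]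
  have hlin : g * (a / g * s) = a * s := by
    field_simp
  rw [sqrt_div ha, mul_sub, mul_sub, mul_one, hsqrt, hlin]

lemma sub_sqrt_mul_sqrt_lt {a g g' : ℝ} (ha : 0 ≤ a) (hag : a ≤ g) (hgg : g < g') :
    g - √a * √g < g' - √a * √g' := by
  have hg : 0 ≤ g := ha.trans hag
  have hsa : √a ≤ √g := sqrt_le_sqrt hag
  have hsg : √g < √g' := sqrt_lt_sqrt hg hgg
  have hfactor : (g' - √a * √g') - (g - √a * √g) = (√g' - √g) * (√g' + √g - √a) := by
    linear_combination mul_self_sqrt hg - mul_self_sqrt (hg.trans hgg.le)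
  have hpos : 0 < (√g' - √g) * (√g' + √g - √a) :=
    mul_pos (sub_pos.2 hsg) (by linarith [sqrt_nonneg g])
  linarith

lemma mul_one_sub_sqrt_div_sub_div_mul_lt {a g g' : ℝ} (s : ℝ) (ha : 0 ≤ a) (hag : a ≤ g)
    (hg : 0 < g) (hgg : g < g') :
    g * (1 - √(a / g) - a / g * s) < g' * (1 - √(a / g') - a / g' * s) := by
  rw [mul_one_sub_sqrt_div_sub_div_mul s ha hg, mul_one_sub_sqrt_div_sub_div_mul s ha (hg.trans hgg)]
  linarith [sub_sqrt_mul_sqrt_lt ha hag hgg]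

lemma zdt3G_ite_eq_one (x : Fin 30 → ℝ) :
    zdt3G (fun i : Fin 30 => if i = 0 then x 0 else 0) = 1 := by
  unfold zdt3G
  rw [Finset.sum_eq_zero fun i hi => if_neg (Finset.ne_of_mem_erase hi)]
  ring

lemma zdt3F2_ite_lt (x : Fin 30 → ℝ) (hx : x 0 ∈ Set.Icc (0 : ℝ) 1)
    (hs : 0 < ∑ i ∈ Finset.univ.erase (0 : Fin 30), x i) :
    zdt3F2 (fun i : Fin 30 => if i = 0 then x 0 else 0) < zdt3F2 x := by
  have hg : 1 < zdt3G x := by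
    unfold zdt3G; linarith [mul_pos (by norm_num : (0 : ℝ) < 9 / 29) hs]
  unfold zdt3F2
  rw [zdt3G_ite_eq_one]
  beta_reduce
  rw [if_pos rfl]
  exact mul_one_sub_sqrt_div_sub_div_mul_lt _ hx.1 hx.2 one_pos hg

/-- For ZDT3, every feasible point with `Σ_{i=2}^{30} x_i > 0` is strictly
dominated by `y = (x_1, 0, ..., 0)`; consequently every Pareto optimal point
satisfies `x_i = 0` for all `i ≥ 2`. -/
theorem zdt3_dominated_and_pareto_necessary :
    (∀ x : Fin 30 → ℝ, (∀ i, x i ∈ Set.Icc (0 : ℝ) 1) →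
      0 < ∑ i ∈ Finset.univ.erase (0 : Fin 30), x i →
      (fun i : Fin 30 => if i = 0 then x 0 else 0) 0 = x 0 ∧
        zdt3F2 (fun i : Fin 30 => if i = 0 then x 0 else 0) < zdt3F2 x) ∧
    (∀ x : Fin 30 → ℝ, (∀ i, x i ∈ Set.Icc (0 : ℝ) 1) →
      (¬ ∃ y : Fin 30 → ℝ, (∀ i, y i ∈ Set.Icc (0 : ℝ) 1) ∧
          y 0 ≤ x 0 ∧ zdt3F2 y ≤ zdt3F2 x ∧ (y 0 < x 0 ∨ zdt3F2 y < zdt3F2 x)) →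
      ∀ i : Fin 30, i ≠ 0 → x i = 0) := by
  refine ⟨fun x hx hs => ⟨rfl, zdt3F2_ite_lt x (hx 0) hs⟩, ?_⟩
  intro x hx hpareto i hi
  by_contra hxi
  have hs : 0 < ∑ j ∈ Finset.univ.erase (0 : Fin 30), x j :=
    Finset.sum_pos' (fun j _ => (hx j).1)
      ⟨i, Finset.mem_erase.2 ⟨hi, Finset.mem_univ i⟩, (hx i).1.lt_of_ne' hxi⟩
  have hlt := zdt3F2_ite_lt x (hx 0) hs
  have hfeas (j : Fin 30) : (if j = 0 then x 0 else 0) ∈ Set.Icc (0 : ℝ) 1 := by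
    split_ifs
    · exact hx 0
    · exact ⟨le_rfl, zero_le_one⟩
  exact hpareto ⟨_, hfeas, le_of_eq (if_pos rfl), hlt.le, Or.inr hlt⟩
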